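/- arXiv:math/0507224 — 4 statements merged into one kernel-verified Lean document; each statement's English description precedes it below -/
import Mathlib

section
/- Let S, T ⊆ [n-1] with ([n-1]\S) ∩ T = ∅. Then the number of permutations w of [n] satisfying ([n-1]\S) ⊆ C(w) and T ⊆ D(w) equals η([n-1]\S)/η([n-1]\T). -/
open Finset

/-- The connectivity set of a word `w` of length `n+1` (0-based indices in `[n-1]` ≅ `Fin n`):
`i ∈ C(w)` iff `w j < w k` whenever `j ≤ i < k`. -/
def Cset {n : ℕ} {α : Type*} [LinearOrder α] (w : Fin (n+1) → α) : Finset (Fin n) :=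
  Finset.univ.filter (fun i => ∀ j k : Fin (n+1), (j : ℕ) ≤ (i : ℕ) → (i : ℕ) < (k : ℕ) → w j < w k)

/-- The descent set of a permutation of `[n]` (modelled on `Fin (n+1)`, 0-based). -/
def Dset {n : ℕ} (w : Equiv.Perm (Fin (n+1))) : Finset (Fin n) :=
  Finset.univ.filter (fun i => w i.succ < w i.castSucc)

/-- The list of gaps `i₁, i₂-i₁, …, n - i_k` determined by `S = {i₁ < … < i_k} ⊆ [n-1]`
(here the ambient set is `[n]` with `n+1` replaced appropriately: sets live in `Fin n`,
permutations act on `n+1` points). -/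
def gaps {n : ℕ} (S : Finset (Fin n)) : List ℕ :=
  let l := (S.sort (· ≤ ·)).map (fun i => (i : ℕ) + 1)
  List.zipWith (fun a b => b - a) (0 :: l) (l ++ [n+1])

/-- `η(S) = i₁!(i₂-i₁)!⋯(n-i_k)!`. -/
def eta {n : ℕ} (S : Finset (Fin n)) : ℕ := ((gaps S).map Nat.factorial).prod

def invNum {m : ℕ} (w : Equiv.Perm (Fin m)) : ℕ :=
  (Finset.univ.filter (fun p : Fin m × Fin m => p.1 < p.2 ∧ w p.2 < w p.1)).card

/-- `z(T)`: sum of binomial coefficients `C(gap, 2)` over the gaps of the complement of `T`. -/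
def zstat {n : ℕ} (T : Finset (Fin n)) : ℕ := ((gaps Tᶜ).map (fun a => a.choose 2)).sum

/-- The `q`-factorial `[j]!_q` in `ℤ[q]`. -/
noncomputable def qFact (j : ℕ) : Polynomial ℤ :=
  ∏ a ∈ Finset.range j, ∑ b ∈ Finset.range (a+1), Polynomial.X ^ b

/-- `η(S, q)`, the `q`-analogue of `η(S)`. -/
noncomputable def etaq {n : ℕ} (S : Finset (Fin n)) : Polynomial ℤ := ((gaps S).map qFact).prod

/-!
Cutting the positions `0, …, n` after each element of `B` splits them into `#B + 1` intervals,
the blocks of `B`, and `B ⊆ C(w)` says exactly that `w` maps every block onto itself. These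
permutations form a Young subgroup `G_B` of order `η(B)`. If `A ⊆ B`, then `G_B ≤ G_A`, and every
`w ∈ G_A` factors uniquely as `w₀ * u` with `u ∈ G_B` and `w₀` decreasing on each block of `B`:
`u⁻¹` is the permutation that sorts the values of `w` decreasingly inside each block. For
`B = [n-1] \ T` the condition on `w₀` is `T ⊆ D(w₀)`, so `#{w₀ ∈ G_A | T ⊆ D(w₀)} * η(B) = η(A)`.
-/

section

variable {n : ℕ}

/-- The index of the block of `B` containing the position `x`; `i ∈ B` separates the positions
`i` and `i + 1`. -/
def blockIdx (B : Finset (Fin n)) (x : Fin (n+1)) : ℕ :=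
  #(B.filter fun a : Fin n => (a : ℕ) < x)

lemma blockIdx_mono (B : Finset (Fin n)) : Monotone (blockIdx B) := fun _ _ hxy =>
  card_le_card <| monotone_filter_right _ fun _ _ ha => ha.trans_le hxy

lemma blockIdx_le_card (B : Finset (Fin n)) (x : Fin (n+1)) : blockIdx B x ≤ #B :=
  card_filter_le _ _

lemma le_iff_blockIdx_le {B : Finset (Fin n)} {i : Fin n} (hi : i ∈ B) (x : Fin (n+1)) :
    (x : ℕ) ≤ i ↔ blockIdx B x ≤ blockIdx B i.castSucc := by
  refine ⟨fun hx => blockIdx_mono B (Fin.le_def.2 hx), fun h => ?_⟩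
  by_contra! hx
  refine h.not_gt (card_lt_card ⟨monotone_filter_right _ fun a _ ha => ?_, fun hsub => ?_⟩)
  · exact lt_trans (by simpa using ha) hx
  · simpa using (mem_filter.1 (hsub (mem_filter.2 ⟨hi, hx⟩))).2

lemma blockIdx_castSucc_eq_succ_iff {B : Finset (Fin n)} {i : Fin n} :
    blockIdx B i.castSucc = blockIdx B i.succ ↔ i ∉ B := by
  refine ⟨fun h hi => ?_, fun hi => ?_⟩
  · have := (le_iff_blockIdx_le hi i.succ).2 h.ge
    simp at this
  · unfold blockIdx
    congr 1
    refine filter_congr fun a ha => ?_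
    have : (a : ℕ) ≠ i := fun h => hi (Fin.ext h ▸ ha)
    simp only [Fin.val_castSucc, Fin.val_succ]
    omega

lemma mem_Cset_iff {w : Equiv.Perm (Fin (n+1))} {i : Fin n} :
    i ∈ Cset ⇑w ↔ ∀ x, ((w x : ℕ) ≤ i ↔ (x : ℕ) ≤ i) := by
  let P : Set (Fin (n+1)) := {x | (x : ℕ) ≤ i}
  have mapsTo_iff (s : Set (Fin (n+1))) (hs : Set.MapsTo w s s) (x) : w x ∈ s ↔ x ∈ s :=
    ⟨fun hx => by simpa using w.perm_symm_mapsTo_of_mapsTo hs hx, fun hx => hs hx⟩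
  simp only [Cset, mem_filter, mem_univ, true_and]
  refine ⟨fun hC => mapsTo_iff P fun j hj => ?_, fun hP j k hj hk => ?_⟩
  · -- otherwise `w` would map the positions after `i` into, hence onto, themselves
    by_contra hwj
    have hcompl : Set.MapsTo w Pᶜ Pᶜ := fun k hk hwk =>
      hwj (le_trans (Fin.le_def.1 (hC j k hj (not_le.1 hk)).le) hwk)
    exact (mapsTo_iff Pᶜ hcompl j).1 hwj hj
  · have h1 := (hP j).2 hj
    have h2 := (hP k).not.2 hk.not_ge
    exact Fin.lt_def.2 (by omega)

lemma subset_Cset_iff {B : Finset (Fin n)} {w : Equiv.Perm (Fin (n+1))} :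
    B ⊆ Cset ⇑w ↔ blockIdx B ∘ w = blockIdx B := by
  simp only [subset_iff, mem_Cset_iff, funext_iff, Function.comp_apply]
  refine ⟨fun h x => ?_, fun h i hi x => ?_⟩
  · unfold blockIdx
    congr 1
    refine filter_congr fun a ha => ?_
    simpa using (h ha x).not
  · rw [le_iff_blockIdx_le hi, le_iff_blockIdx_le hi, h]

lemma lt_blockIdx_iff (B : Finset (Fin n)) (t : Fin #B) (x : Fin (n+1)) :
    (t : ℕ) < blockIdx B x ↔ (B.orderEmbOfFin rfl t : ℕ) < x := by
  have hcard : blockIdx B x = #{s : Fin #B | (B.orderEmbOfFin rfl s : ℕ) < x} := by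
    conv_lhs => rw [blockIdx, ← B.map_orderEmbOfFin_univ rfl, filter_map, card_map]
    rfl
  rw [hcard]
  exact Fin.lt_card_filter_univ_iff_apply_of_imp _ fun s r hrs hs =>
    lt_of_le_of_lt (Fin.le_def.1 ((B.orderEmbOfFin rfl).monotone hrs)) hs

/-- The first position of block `t` of `B`, and `n + 1` for `t > #B`. -/
def blockStart (B : Finset (Fin n)) : ℕ → ℕ
  | 0 => 0
  | t + 1 => if h : t < #B then B.orderEmbOfFin rfl ⟨t, h⟩ + 1 else n + 1

lemma blockStart_le_iff (B : Finset (Fin n)) (t : ℕ) (x : Fin (n+1)) :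
    blockStart B t ≤ x ↔ t ≤ blockIdx B x := by
  rcases t with _ | t
  · simp [blockStart]
  by_cases ht : t < #B
  · simpa [blockStart, ht, Nat.add_one_le_iff] using (lt_blockIdx_iff B ⟨t, ht⟩ x).symm
  · have := blockIdx_le_card B x
    simp only [blockStart, ht, dite_false]
    omega

lemma blockStart_le (B : Finset (Fin n)) (t : ℕ) : blockStart B t ≤ n + 1 := by
  rcases t with _ | t
  · simp [blockStart]
  · simp only [blockStart]
    split_ifs <;> omega

lemma card_blockIdx_eq (B : Finset (Fin n)) (t : ℕ) :
    Fintype.card {x // blockIdx B x = t} = blockStart B (t+1) - blockStart B t := by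
  rw [Fintype.card_subtype, ← Nat.card_Ico]
  have hfilter : ({x | blockIdx B x = t} : Finset (Fin (n+1))) =
      (Ico (blockStart B t) (blockStart B (t+1))).attachFin
        fun m hm => (mem_Ico.1 hm).2.trans_le (blockStart_le B _) := by
    ext x
    simp only [mem_filter, mem_univ, true_and, mem_attachFin, mem_Ico, blockStart_le_iff,
      not_le.symm]
    omega
  rw [hfilter, card_attachFin]

lemma gaps_eq_ofFn (B : Finset (Fin n)) :
    gaps B = List.ofFn fun t : Fin (#B + 1) => blockStart B (t+1) - blockStart B t := by
  have hsort : ((B.sort (· ≤ ·)).flatMap fun a : Fin n => [(a : ℕ)]) =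
      List.ofFn fun t => (B.orderEmbOfFin rfl t : ℕ) := by
    rw [← List.map_eq_flatMap, ← B.listMap_orderEmbOfFin_finRange rfl, List.map_map,
      List.ofFn_eq_map]
    rfl
  apply List.ext_getElem
  · simp [gaps]
  · intro t h1 h2
    simp only [gaps, List.pure_def, List.bind_eq_flatMap]
    rcases t with _ | t
    · by_cases hB : 0 < #B <;> simp [List.getElem_append, blockStart, hsort, hB]
    · simp [List.getElem_append, blockStart, hsort]

lemma card_subset_Cset (B : Finset (Fin n)) :
    Fintype.card {w : Equiv.Perm (Fin (n+1)) // B ⊆ Cset ⇑w} = eta B := by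
  let f : Fin (n+1) → Fin (#B + 1) := fun x =>
    ⟨blockIdx B x, Nat.lt_succ_of_le (blockIdx_le_card B x)⟩
  have hf : ∀ w : Equiv.Perm (Fin (n+1)), B ⊆ Cset ⇑w ↔ f ∘ w = f := fun w => by
    rw [subset_Cset_iff, ← (Fin.val_injective.comp_left).eq_iff]
    rfl
  rw [Fintype.card_congr (Equiv.subtypeEquivRight hf), DomMulAct.stabilizer_card f, eta,
    gaps_eq_ofFn, List.map_ofFn, List.prod_ofFn]
  refine Fintype.prod_congr _ _ fun t => ?_
  simp only [f, Fin.ext_iff, card_blockIdx_eq, Function.comp_apply]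

def StrictAntiOnBlocks (B : Finset (Fin n)) (w : Equiv.Perm (Fin (n+1))) : Prop :=
  ∀ x y, blockIdx B x = blockIdx B y → x < y → w y < w x

lemma subset_Dset_iff {T : Finset (Fin n)} {w : Equiv.Perm (Fin (n+1))} :
    T ⊆ Dset w ↔ StrictAntiOnBlocks Tᶜ w := by
  refine ⟨fun hT x y hxy hlt => ?_, fun hw i hi => ?_⟩
  · have hblock : Set.OrdConnected {z | blockIdx Tᶜ z = blockIdx Tᶜ x} :=
      ⟨fun a ha b hb z hz => le_antisymm ((blockIdx_mono _ hz.2).trans_eq hb)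
        (ha.symm.trans_le (blockIdx_mono _ hz.1))⟩
    -- blocks are intervals, so it suffices to compare neighbouring positions
    refine strictAntiOn_of_succ_lt hblock (fun z hz hzs hsz => ?_) rfl hxy.symm hlt
    obtain ⟨i, rfl⟩ := Fin.eq_castSucc_of_ne_last (x := z) fun h =>
      hz fun b _ => h ▸ Fin.le_last b
    rw [Fin.orderSucc_castSucc] at hsz ⊢
    have hiT : i ∈ T := by
      simpa using blockIdx_castSucc_eq_succ_iff.1 (hzs.trans hsz.symm)
    simpa [Dset] using hT hiT
  · simpa [Dset] using hw i.castSucc i.succ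
      (blockIdx_castSucc_eq_succ_iff.2 (notMem_compl.2 hi)) i.castSucc_lt_succ

lemma subset_Cset_mul_iff {A : Finset (Fin n)} {w u : Equiv.Perm (Fin (n+1))}
    (hu : A ⊆ Cset ⇑u) : A ⊆ Cset ⇑(w * u) ↔ A ⊆ Cset ⇑w := by
  rw [subset_Cset_iff] at hu
  rw [subset_Cset_iff, subset_Cset_iff, Equiv.Perm.coe_mul, ← Function.comp_assoc]
  refine ⟨fun h => funext fun x => ?_, fun h => by rw [h, hu]⟩
  calc blockIdx A (w x) = blockIdx A (u⁻¹ x) := by simpa using congrFun h (u⁻¹ x)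
    _ = blockIdx A x := by simpa using (congrFun hu (u⁻¹ x)).symm

lemma subset_Cset_inv {B : Finset (Fin n)} {u : Equiv.Perm (Fin (n+1))} (hu : B ⊆ Cset ⇑u) :
    B ⊆ Cset ⇑u⁻¹ :=
  (subset_Cset_mul_iff hu).1 (by rw [inv_mul_cancel, subset_Cset_iff]; rfl)

def blockKey (B : Finset (Fin n)) (w : Equiv.Perm (Fin (n+1))) (x : Fin (n+1)) :
    ℕ ×ₗ (Fin (n+1))ᵒᵈ :=
  toLex (blockIdx B x, OrderDual.toDual (w x))

lemma blockKey_injective (B : Finset (Fin n)) (w : Equiv.Perm (Fin (n+1))) :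
    Function.Injective (blockKey B w) := fun _ _ h =>
  w.injective (congrArg (fun p => OrderDual.ofDual (ofLex p).2) h)

lemma monotone_blockKey_comp_iff {B : Finset (Fin n)} {w σ : Equiv.Perm (Fin (n+1))} :
    Monotone (blockKey B w ∘ σ) ↔ B ⊆ Cset ⇑σ ∧ StrictAntiOnBlocks B (w * σ) := by
  have key_le {x y} : blockKey B w (σ x) ≤ blockKey B w (σ y) ↔
      blockIdx B (σ x) < blockIdx B (σ y) ∨
        blockIdx B (σ x) = blockIdx B (σ y) ∧ w (σ y) ≤ w (σ x) := Prod.Lex.toLex_le_toLex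
  rw [subset_Cset_iff]
  refine ⟨fun h => ?_, fun ⟨hσ, hw⟩ x y hxy => ?_⟩
  · have hσ : blockIdx B ∘ σ = blockIdx B :=
      Tuple.unique_monotone (τ := 1) (Prod.Lex.monotone_fst_ofLex.comp h) (blockIdx_mono B)
    refine ⟨hσ, fun x y hxy hlt => ?_⟩
    have hσx := congrFun hσ x
    have hσy := congrFun hσ y
    simp only [Function.comp_apply] at hσx hσy
    rcases key_le.1 (h hlt.le) with h' | ⟨-, h'⟩
    · omega
    · exact h'.lt_of_ne fun h => hlt.ne (σ.injective (w.injective h.symm))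
  · have hσx := congrFun hσ x
    have hσy := congrFun hσ y
    simp only [Function.comp_apply] at hσx hσy ⊢
    rw [key_le, hσx, hσy]
    rcases (blockIdx_mono B hxy).lt_or_eq with h | h
    · exact Or.inl h
    · refine Or.inr ⟨h, ?_⟩
      rcases hxy.lt_or_eq with hlt | rfl
      · exact (hw x y h hlt).le
      · rfl

lemma StrictAntiOnBlocks.eq_of_mul_eq_mul {B : Finset (Fin n)}
    {w₀ w₀' u u' : Equiv.Perm (Fin (n+1))}
    (hw₀ : StrictAntiOnBlocks B w₀) (hw₀' : StrictAntiOnBlocks B w₀')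
    (hu : B ⊆ Cset ⇑u) (hu' : B ⊆ Cset ⇑u') (h : w₀ * u = w₀' * u') : u = u' := by
  have hmono : Monotone (blockKey B (w₀ * u) ∘ ⇑u⁻¹) :=
    monotone_blockKey_comp_iff.2 ⟨subset_Cset_inv hu, by rwa [mul_inv_cancel_right]⟩
  have hmono' : Monotone (blockKey B (w₀ * u) ∘ ⇑u'⁻¹) :=
    monotone_blockKey_comp_iff.2 ⟨subset_Cset_inv hu', by rwa [h, mul_inv_cancel_right]⟩
  have := (blockKey_injective B _).comp_left (Tuple.unique_monotone hmono hmono')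
  exact inv_injective (Equiv.coe_inj.1 this)

lemma exists_strictAntiOnBlocks_mul_eq (B : Finset (Fin n)) (w : Equiv.Perm (Fin (n+1))) :
    ∃ w₀ u : Equiv.Perm (Fin (n+1)), StrictAntiOnBlocks B w₀ ∧ B ⊆ Cset ⇑u ∧ w₀ * u = w := by
  let σ := Tuple.sort (blockKey B w)
  obtain ⟨hσ, hw⟩ := monotone_blockKey_comp_iff.1 (Tuple.monotone_sort (blockKey B w))
  exact ⟨w * σ, σ⁻¹, hw, subset_Cset_inv hσ, mul_inv_cancel_right w σ⟩

lemma card_subset_Cset_Dset_mul_card {A T : Finset (Fin n)} (hAT : A ⊆ Tᶜ) :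
    Fintype.card {w : Equiv.Perm (Fin (n+1)) // A ⊆ Cset ⇑w ∧ T ⊆ Dset w} *
        Fintype.card {u : Equiv.Perm (Fin (n+1)) // Tᶜ ⊆ Cset ⇑u} =
      Fintype.card {w : Equiv.Perm (Fin (n+1)) // A ⊆ Cset ⇑w} := by
  rw [← Fintype.card_prod]
  refine Fintype.card_congr (Equiv.ofBijective
    (fun p => ⟨p.1.1 * p.2.1, (subset_Cset_mul_iff (hAT.trans p.2.2)).2 p.1.2.1⟩) ⟨?_, ?_⟩)
  · rintro ⟨⟨w₀, _, hw₀⟩, u, hu⟩ ⟨⟨w₀', _, hw₀'⟩, u', hu'⟩ hmul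
    have h : w₀ * u = w₀' * u' := congrArg Subtype.val hmul
    obtain rfl := (subset_Dset_iff.1 hw₀).eq_of_mul_eq_mul (subset_Dset_iff.1 hw₀') hu hu' h
    obtain rfl := mul_right_cancel h
    rfl
  · rintro ⟨w, hw⟩
    obtain ⟨w₀, u, hw₀, hu, rfl⟩ := exists_strictAntiOnBlocks_mul_eq Tᶜ w
    exact ⟨⟨⟨w₀, (subset_Cset_mul_iff (hAT.trans hu)).1 hw, subset_Dset_iff.2 hw₀⟩, ⟨u, hu⟩⟩, rfl⟩

end

/-- If `([n-1]\S) ∩ T = ∅` then the number of permutations with `[n-1]\S ⊆ C(w)` and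
`T ⊆ D(w)` equals `η([n-1]\S)/η([n-1]\T)`, stated as a product identity. -/
theorem stmt4 (n : ℕ) (S T : Finset (Fin n)) (h : Sᶜ ∩ T = ∅) :
    (Finset.univ.filter
        (fun w : Equiv.Perm (Fin (n+1)) => Sᶜ ⊆ Cset ⇑w ∧ T ⊆ Dset w)).card * eta Tᶜ
      = eta Sᶜ := by
  have hST : Sᶜ ⊆ Tᶜ := subset_compl_iff_disjoint_right.2 (disjoint_iff_inter_eq_empty.2 h)
  rw [← card_subset_Cset Sᶜ, ← card_subset_Cset_Dset_mul_card hST, card_subset_Cset,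
    Fintype.card_subtype]
end

section
/- With M_{ST} = [T ⊆ S], A_{ST} = #{w ∈ S_n : [n-1]\S ⊆ C(w), T ⊆ D(w)}, and Γ_{ST} = #{w ∈ S_n : C(w) = [n-1]\S, D(w) = T}, all matrices indexed by subsets of [n-1], we have M Γ M = A. -/
open Finset

/-- `M Γ M = A` over `ℤ`. -/
theorem stmt11 (n : ℕ)
    (M : Matrix (Finset (Fin n)) (Finset (Fin n)) ℤ)
    (hM : ∀ S T, M S T = if T ⊆ S then 1 else 0)
    (G : Matrix (Finset (Fin n)) (Finset (Fin n)) ℤ)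
    (hG : ∀ S T, G S T = (Finset.univ.filter
        (fun w : Equiv.Perm (Fin (n+1)) => Cset ⇑w = Sᶜ ∧ Dset w = T)).card)
    (A : Matrix (Finset (Fin n)) (Finset (Fin n)) ℤ)
    (hA : ∀ S T, A S T = (Finset.univ.filter
        (fun w : Equiv.Perm (Fin (n+1)) => Sᶜ ⊆ Cset ⇑w ∧ T ⊆ Dset w)).card) :
    M * G * M = A := by
  ext S T
  simp only [Matrix.mul_apply, hM, hG, hA, Finset.card_filter, Nat.cast_sum,
    Nat.cast_ite, Nat.cast_one, Nat.cast_zero]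
  simp only [Finset.sum_mul, Finset.mul_sum]
  rw [Finset.sum_comm]
  refine ((Finset.sum_congr rfl fun y _ => Finset.sum_comm).trans Finset.sum_comm).trans
    (Finset.sum_congr rfl fun w _ => ?_)
  rw [Finset.sum_eq_single ((Cset ⇑w)ᶜ)]
  · rw [Finset.sum_eq_single (Dset w)]
    · have h1 : (Cset ⇑w)ᶜ ⊆ S ↔ Sᶜ ⊆ Cset ⇑w := by rw [← Finset.le_iff_subset, ← Finset.le_iff_subset, compl_le_iff_compl_le]
      simp only [compl_compl, and_true, true_and, if_true, eq_self_iff_true]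
      by_cases h2 : Sᶜ ⊆ Cset ⇑w <;> by_cases h3 : T ⊆ Dset w <;>
        simp [h1, h2, h3]
    · intro x _ hx
      simp [Ne.symm hx]
    · simp
  · intro y _ hy
    have : Cset ⇑w ≠ yᶜ := fun h => hy (by rw [h, compl_compl])
    simp [this]
  · simp
end

section
/- Let T = {i_1 < ... < i_k} ⊆ [n-1] and let N_T be the multiset {1^{i_1}, 2^{i_2-i_1}, ..., (k+1)^{n-i_k}}. For any S ⊆ [n-1], the number of words w (arrangements of N_T) with connectivity set C(w) = S equals the number of permutations w ∈ S_n with C(w) = S and D(w) ⊇ [n-1]\T. -/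
/-!
The bijection is `w ↦ letterT n T ∘ w⁻¹`: each value of `w` receives the letter of the block of
`T` containing its position. The condition `D(w) ⊇ [n-1] ∖ T` says that `w` decreases inside each
block, i.e. that `p ↦ (letterT p, -w p)` is lexicographically increasing, so `w` is recovered from
the word by sorting positions by letter with ties broken from right to left (`descSort`).
Connectivity is preserved: `i` is a cut of a permutation iff it maps `{0, …, i}` onto itself; a
cut of the word forces this because the letters are weakly increasing, and conversely a cut of
`w` at `i` forces `i ∈ T` (otherwise `i` would be a descent), so the letters jump there.
-/

open Finset

/-- The letter in position `p` (0-based) of the sorted arrangement of the multiset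
`N_T = {1^{i₁}, 2^{i₂-i₁}, …, (k+1)^{n-i_k}}` for `T = {i₁ < … < i_k}`. -/
def letterT (n : ℕ) (T : Finset (Fin n)) (p : Fin (n+1)) : Fin (n+2) :=
  ⟨(T.filter (fun t : Fin n => (t : ℕ) < (p : ℕ))).card + 1, by
    have h1 : (T.filter (fun t : Fin n => (t : ℕ) < (p : ℕ))).card ≤ T.card :=
      Finset.card_filter_le _ _
    have h2 : T.card ≤ n := by
      simpa using Finset.card_le_univ T
    omega⟩

lemma Monotone.eq_of_map_univ_val_eq {m : ℕ} {α : Type*} [LinearOrder α] {f g : Fin m → α}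
    (hf : Monotone f) (hg : Monotone g) (h : univ.val.map f = univ.val.map g) : f = g := by
  rw [Fin.univ_val_map, Fin.univ_val_map, Multiset.coe_eq_coe] at h
  exact List.ofFn_injective (h.eq_of_sortedLE hf.sortedLE_ofFn hg.sortedLE_ofFn)

lemma map_univ_val_comp_perm {m : ℕ} {α : Type*} (f : Fin m → α) (σ : Equiv.Perm (Fin m)) :
    univ.val.map (f ∘ σ) = univ.val.map f := by
  rw [← Multiset.map_map, Multiset.map_univ_val_equiv]

lemma Equiv.Perm.mapsTo_inv {α : Type*} [Finite α] (σ : Equiv.Perm α) {s : Set α}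
    (h : Set.MapsTo σ s s) : Set.MapsTo ⇑σ⁻¹ s s := by
  intro a ha
  obtain ⟨b, hb, rfl⟩ := ((s.toFinite.injOn_iff_bijOn_of_mapsTo h).mp σ.injective.injOn).surjOn ha
  simpa using hb

section Connectivity

variable {n : ℕ}

lemma mem_Cset_iff_s12 {α : Type*} [LinearOrder α] {u : Fin (n+1) → α} {i : Fin n} :
    i ∈ Cset u ↔ ∀ j k, j ≤ i.castSucc → i.castSucc < k → u j < u k := by
  simp [Cset, Fin.le_def, Fin.lt_def]

lemma mem_Cset_perm_iff {w : Equiv.Perm (Fin (n+1))} {i : Fin n} :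
    i ∈ Cset ⇑w ↔ Set.MapsTo w (Set.Iic i.castSucc) (Set.Iic i.castSucc) := by
  rw [mem_Cset_iff_s12]
  constructor
  · intro h j hj
    by_contra hwj
    have hout : Set.MapsTo w (Set.Ioi i.castSucc) (Set.Ioi i.castSucc) := fun k hk =>
      (not_le.mp hwj).trans (h j k hj hk)
    have hj' : i.castSucc < j := by
      simpa using w.mapsTo_inv hout (Set.mem_Ioi.mpr (not_le.mp hwj))
    exact hj'.not_ge hj
  · intro h j k hj hk
    have hwk : i.castSucc < w k := by
      by_contra hwk
      have hk' : k ≤ i.castSucc := by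
        simpa using w.mapsTo_inv h (Set.mem_Iic.mpr (not_lt.mp hwk))
      exact hk'.not_gt hk
    exact (h hj).trans_lt hwk

variable {β : Type*} [LinearOrder β] {L : Fin (n+1) → β} {w : Equiv.Perm (Fin (n+1))} {i : Fin n}

lemma mem_Cset_of_mem_Cset_comp_inv (hL : Monotone L) (h : i ∈ Cset (L ∘ ⇑w⁻¹)) :
    i ∈ Cset ⇑w := by
  rw [mem_Cset_iff_s12] at h
  have hinv : Set.MapsTo ⇑w⁻¹ (Set.Iic i.castSucc) (Set.Iic i.castSucc) := by
    intro q hq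
    by_contra hp
    have hout : Set.MapsTo ⇑w⁻¹ (Set.Ioi i.castSucc) (Set.Ioi i.castSucc) := fun r hr =>
      (not_le.mp hp).trans (hL.reflect_lt (h q r hq hr))
    have hq' : i.castSucc < q := by
      simpa using w⁻¹.mapsTo_inv hout (Set.mem_Ioi.mpr (not_le.mp hp))
    exact hq'.not_ge hq
  simpa [mem_Cset_perm_iff] using w⁻¹.mapsTo_inv hinv

lemma mem_Cset_comp_inv (hL : Monotone L) (h : i ∈ Cset ⇑w) (hi : L i.castSucc < L i.succ) :
    i ∈ Cset (L ∘ ⇑w⁻¹) := by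
  rw [mem_Cset_perm_iff] at h
  rw [mem_Cset_iff_s12]
  intro q r hq hr
  have hwr : i.castSucc < w⁻¹ r := by
    by_contra hwr
    have hr' : r ≤ i.castSucc := by simpa using h (Set.mem_Iic.mpr (not_lt.mp hwr))
    exact hr'.not_gt hr
  calc L (w⁻¹ q) ≤ L i.castSucc := hL (w.mapsTo_inv h hq)
    _ < L i.succ := hi
    _ ≤ L (w⁻¹ r) := hL (Fin.castSucc_lt_iff_succ_le.mp hwr)

end Connectivity

section DescSort

variable {m : ℕ} {α : Type*} [LinearOrder α]

def descSort (u : Fin m → α) : Equiv.Perm (Fin m) :=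
  Tuple.sort fun q => toLex (u q, OrderDual.toDual q)

lemma strictMono_descSort (u : Fin m → α) :
    StrictMono fun p => toLex (u (descSort u p), OrderDual.toDual (descSort u p)) := by
  refine (Tuple.monotone_sort (fun q => toLex (u q, OrderDual.toDual q))).strictMono_of_injective
    fun p q h => (descSort u).injective ?_
  simpa using congrArg (fun x => OrderDual.ofDual (ofLex x).2) h

lemma eq_descSort_of_strictMono {u : Fin m → α} {σ : Equiv.Perm (Fin m)}
    (h : StrictMono fun p => toLex (u (σ p), OrderDual.toDual (σ p))) : σ = descSort u :=
  Tuple.eq_sort_iff.mpr ⟨h.monotone, fun _ _ hij heq => absurd heq (h hij).ne⟩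

lemma monotone_comp_descSort (u : Fin m → α) : Monotone (u ∘ descSort u) :=
  Prod.Lex.monotone_fst_ofLex.comp (strictMono_descSort u).monotone

end DescSort

section Arrangements

variable {n : ℕ} {T : Finset (Fin n)}

lemma letterT_mono : Monotone (letterT n T) := fun p q hpq => by
  simp only [letterT, Fin.mk_le_mk, Nat.add_le_add_iff_right]
  exact card_le_card (monotone_filter_right T fun t _ h => h.trans_le hpq)

lemma letterT_castSucc_lt_succ {i : Fin n} (hi : i ∈ T) :
    letterT n T i.castSucc < letterT n T i.succ := by
  simp only [letterT, Fin.mk_lt_mk, Fin.val_castSucc, Fin.val_succ, Nat.add_lt_add_iff_right]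
  refine card_lt_card ((ssubset_iff_of_subset ?_).mpr ⟨i, by simp [hi], by simp⟩)
  exact monotone_filter_right T fun t _ h => h.trans (Nat.lt_succ_self _)

lemma letterT_castSucc_eq_succ {i : Fin n} (hi : i ∉ T) :
    letterT n T i.castSucc = letterT n T i.succ := by
  simp only [letterT, Fin.mk.injEq, Fin.val_castSucc, Fin.val_succ, Nat.add_right_cancel_iff]
  congr 1
  refine filter_congr fun t ht => ?_
  have : (t : ℕ) ≠ i := Fin.val_ne_of_ne (ne_of_mem_of_not_mem ht hi)
  omega

lemma compl_subset_Dset_iff_strictMono {w : Equiv.Perm (Fin (n+1))} :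
    Tᶜ ⊆ Dset w ↔ StrictMono fun p => toLex (letterT n T p, OrderDual.toDual (w p)) := by
  simp only [Fin.strictMono_iff_lt_succ, Prod.Lex.toLex_lt_toLex, OrderDual.toDual_lt_toDual]
  constructor
  · intro h i
    by_cases hi : i ∈ T
    · exact Or.inl (letterT_castSucc_lt_succ hi)
    · exact Or.inr ⟨letterT_castSucc_eq_succ hi, by simpa [Dset] using h (mem_compl.mpr hi)⟩
  · intro h i hi
    have hi := mem_compl.mp hi
    simpa [Dset, letterT_castSucc_eq_succ hi] using h i

variable {w : Equiv.Perm (Fin (n+1))} {u : Fin (n+1) → Fin (n+2)}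

lemma Cset_letterT_comp_inv (hw : Tᶜ ⊆ Dset w) : Cset (letterT n T ∘ ⇑w⁻¹) = Cset ⇑w := by
  ext i
  refine ⟨mem_Cset_of_mem_Cset_comp_inv letterT_mono,
    fun h => mem_Cset_comp_inv letterT_mono h (letterT_castSucc_lt_succ ?_)⟩
  by_contra hi
  have hdes : w i.succ < w i.castSucc := by simpa [Dset] using hw (mem_compl.mpr hi)
  exact hdes.not_gt (mem_Cset_iff_s12.mp h _ _ le_rfl Fin.castSucc_lt_succ)

lemma descSort_letterT_comp_inv (hw : Tᶜ ⊆ Dset w) : descSort (letterT n T ∘ ⇑w⁻¹) = w :=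
  (eq_descSort_of_strictMono (by simpa using compl_subset_Dset_iff_strictMono.mp hw)).symm

lemma comp_descSort_eq_letterT (hu : univ.val.map u = univ.val.map (letterT n T)) :
    u ∘ descSort u = letterT n T :=
  (monotone_comp_descSort u).eq_of_map_univ_val_eq letterT_mono
    (by rw [map_univ_val_comp_perm, hu])

lemma letterT_comp_inv_descSort (hu : univ.val.map u = univ.val.map (letterT n T)) :
    letterT n T ∘ ⇑(descSort u)⁻¹ = u := by
  rw [← comp_descSort_eq_letterT hu]
  ext q
  simp

lemma compl_subset_Dset_descSort (hu : univ.val.map u = univ.val.map (letterT n T)) :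
    Tᶜ ⊆ Dset (descSort u) := by
  rw [compl_subset_Dset_iff_strictMono, ← comp_descSort_eq_letterT hu]
  exact strictMono_descSort u

end Arrangements

/-- The number of arrangements `w` of the multiset `N_T` with `C(w) = S` equals the number
of permutations `w ∈ S_n` with `C(w) = S` and `D(w) ⊇ [n-1]\T`. -/
theorem stmt12 (n : ℕ) (T S : Finset (Fin n)) :
    (Finset.univ.filter (fun w : Fin (n+1) → Fin (n+2) =>
        Finset.univ.val.map w = Finset.univ.val.map (letterT n T) ∧ Cset w = S)).card
      = (Finset.univ.filter (fun w : Equiv.Perm (Fin (n+1)) =>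
          Cset ⇑w = S ∧ Tᶜ ⊆ Dset w)).card := by
  refine (card_nbij' (fun w : Equiv.Perm (Fin (n+1)) => letterT n T ∘ ⇑w⁻¹) descSort
    ?_ ?_ ?_ ?_).symm
  · intro w hw
    simp only [coe_filter, mem_univ, true_and, Set.mem_ofPred_eq] at hw ⊢
    exact ⟨map_univ_val_comp_perm _ _, (Cset_letterT_comp_inv hw.2).trans hw.1⟩
  · intro u hu
    simp only [coe_filter, mem_univ, true_and, Set.mem_ofPred_eq] at hu ⊢
    have hdes := compl_subset_Dset_descSort hu.1
    rw [← Cset_letterT_comp_inv hdes, letterT_comp_inv_descSort hu.1]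
    exact ⟨hu.2, hdes⟩
  · intro w hw
    exact descSort_letterT_comp_inv (mem_filter.mp hw).2.2
  · intro u hu
    exact letterT_comp_inv_descSort (mem_filter.mp hu).2.1
end

section
/- For any T ⊆ [n-1], the minimum of inv(w) over permutations w ∈ S_n with T ⊆ D(w) equals z(T) = Σ C(i_{j+1}-i_j, 2), the sum of binomial coefficients over consecutive gaps of the complement [n-1]\T = {i_1 < ... < i_k} (with i_0 = 0, i_{k+1} = n). -/
open Finset

section StmtAux

variable {n : ℕ} (T : Finset (Fin n))

/-- number of "boundaries" (elements of `Tᶜ`) strictly below `i`. -/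
def bidx (i : ℕ) : ℕ := (Tᶜ.filter fun c : Fin n => (c : ℕ) < i).card

/-- start of block `t` -/
def loF (t : ℕ) : ℕ :=
  if h : 1 ≤ t ∧ t ≤ Tᶜ.card then (Tᶜ.orderEmbOfFin rfl ⟨t-1, by omega⟩ : Fin n) + 1 else 0

/-- end (exclusive) of block `t` -/
def hiF (t : ℕ) : ℕ :=
  if h : t < Tᶜ.card then (Tᶜ.orderEmbOfFin rfl ⟨t, h⟩ : Fin n) + 1 else n + 1

lemma downward_count {k : ℕ} (s : Finset (Fin k))
    (hd : ∀ j j' : Fin k, j' ≤ j → j ∈ s → j' ∈ s) (j : Fin k) :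
    j ∈ s ↔ (j : ℕ) < s.card := by
  constructor
  · intro hj
    have h1 : Finset.Iic j ⊆ s := fun x hx => hd j x (mem_Iic.mp hx) hj
    have := Finset.card_le_card h1
    rw [Fin.card_Iic] at this
    omega
  · intro hj
    by_contra hns
    have h1 : s ⊆ Finset.Iio j := by
      intro x hx
      rw [mem_Iio]
      by_contra hxx
      exact hns (hd x j (le_of_not_gt hxx) hx)
    have := Finset.card_le_card h1
    rw [Fin.card_Iio] at this
    omega

lemma bidx_char (j : Fin Tᶜ.card) (i : ℕ) :
    ((Tᶜ.orderEmbOfFin rfl j : Fin n) : ℕ) < i ↔ (j : ℕ) < bidx T i := by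
  classical
  set e := Tᶜ.orderEmbOfFin rfl with he
  have hcard : (Finset.univ.filter fun j : Fin Tᶜ.card => ((e j : Fin n) : ℕ) < i).card
      = bidx T i := by
    apply Finset.card_bij (fun j _ => e j)
    · intro a ha
      simp only [mem_filter, mem_univ, true_and] at ha ⊢
      exact ⟨orderEmbOfFin_mem _ _ _, ha⟩
    · intro a _ b _ hab
      exact e.injective hab
    · intro b hb
      simp only [mem_filter] at hb
      have : b ∈ Set.range e := by rw [he, range_orderEmbOfFin]; exact hb.1
      obtain ⟨j', hj'⟩ := this
      refine ⟨j', ?_, hj'⟩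
      simp only [mem_filter, mem_univ, true_and, hj']
      exact hb.2
  rw [← hcard]
  have hd : ∀ a b : Fin Tᶜ.card, b ≤ a →
      a ∈ (Finset.univ.filter fun j : Fin Tᶜ.card => ((e j : Fin n) : ℕ) < i) →
      b ∈ (Finset.univ.filter fun j : Fin Tᶜ.card => ((e j : Fin n) : ℕ) < i) := by
    intro a b hba hb
    simp only [mem_filter, mem_univ, true_and] at hb ⊢
    exact lt_of_le_of_lt (show ((e b:Fin n):ℕ) ≤ (e a:Fin n) from e.monotone hba) hb
  have := downward_count _ hd j
  simpa using this

lemma bidx_le (i : ℕ) : bidx T i ≤ Tᶜ.card :=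
  Finset.card_le_card (Finset.filter_subset _ _)

lemma loF_le_self (i : ℕ) : loF T (bidx T i) ≤ i := by
  rcases Nat.eq_zero_or_pos (bidx T i) with h | h
  · rw [h, loF]
    rw [dif_neg (by omega)]
    omega
  · have hle := bidx_le T i
    rw [loF, dif_pos ⟨h, hle⟩]
    have := (bidx_char T ⟨bidx T i - 1, by omega⟩ i).mpr (by simp; omega)
    simpa using this

lemma self_lt_hiF (i : ℕ) (hi : i ≤ n) : i < hiF T (bidx T i) := by
  rw [hiF]
  split
  · next h =>
    have := (bidx_char T ⟨bidx T i, h⟩ i).not.mpr (by simp)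
    simp only [not_lt] at this
    omega
  · omega

lemma hiF_le (t : ℕ) : hiF T t ≤ n + 1 := by
  rw [hiF]; split
  · next h =>
    have := ((Tᶜ.orderEmbOfFin rfl) ⟨t, h⟩).isLt
    omega
  · omega

lemma bidx_eq_of (t : ℕ) (ht : t ≤ Tᶜ.card) (i : ℕ) (hin : i ≤ n)
    (h1 : loF T t ≤ i) (h2 : i < hiF T t) : bidx T i = t := by
  set s := bidx T i with hs
  rcases lt_trichotomy s t with h | h | h
  · -- s < t : then t ≥ 1 and loF t = e⟨t-1⟩+1 ≤ i so e⟨t-1⟩ < i so t-1 < s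
    have ht1 : 1 ≤ t := by omega
    rw [loF, dif_pos ⟨ht1, ht⟩] at h1
    have : (⟨t-1, by omega⟩ : Fin Tᶜ.card).val < s :=
      (bidx_char T _ i).mp (by omega)
    simp at this; omega
  · omega
  · -- t < s : then t < k, hiF t = e⟨t⟩+1 and t < s gives e⟨t⟩ < i, contra i < e⟨t⟩+1
    have htk : t < Tᶜ.card := lt_of_lt_of_le h (bidx_le T i)
    rw [hiF, dif_pos htk] at h2
    have : ((Tᶜ.orderEmbOfFin rfl ⟨t, htk⟩ : Fin n) : ℕ) < i :=
      (bidx_char T _ i).mpr (by simpa using h)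
    omega

lemma bidx_mono {i j : ℕ} (h : i ≤ j) : bidx T i ≤ bidx T j := by
  apply Finset.card_le_card
  intro c hc
  simp only [Finset.mem_filter] at hc ⊢
  exact ⟨hc.1, lt_of_lt_of_le hc.2 h⟩

lemma hiF_le_loF {s t : ℕ} (hst : s < t) (ht : t ≤ Tᶜ.card) : hiF T s ≤ loF T t := by
  rw [hiF, loF, dif_pos (show s < Tᶜ.card by omega), dif_pos ⟨by omega, ht⟩]
  have : (Tᶜ.orderEmbOfFin rfl ⟨s, by omega⟩ : Fin n) ≤ (Tᶜ.orderEmbOfFin rfl ⟨t-1, by omega⟩ : Fin n) :=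
    (Tᶜ.orderEmbOfFin rfl).monotone (by simp [Fin.le_def]; omega)
  exact Nat.succ_le_succ this

lemma fiber_card (t : ℕ) (ht : t ≤ Tᶜ.card) :
    ((Finset.univ : Finset (Fin (n+1))).filter fun i : Fin (n+1) => bidx T (i : ℕ) = t).card
      = hiF T t - loF T t := by
  have key : ((Finset.univ : Finset (Fin (n+1))).filter fun i : Fin (n+1) => bidx T (i : ℕ) = t).map
      Fin.valEmbedding = Finset.Ico (loF T t) (hiF T t) := by
    ext x
    simp only [Finset.mem_map, Finset.mem_filter, Finset.mem_univ, true_and,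
      Fin.valEmbedding_apply, Finset.mem_Ico]
    constructor
    · rintro ⟨i, hb, rfl⟩
      have h1 := loF_le_self T (i : ℕ)
      have h2 := self_lt_hiF T (i : ℕ) (Nat.lt_succ_iff.mp i.isLt)
      rw [hb] at h1 h2
      exact ⟨h1, h2⟩
    · rintro ⟨h1, h2⟩
      have hx : x < n + 1 := lt_of_lt_of_le h2 (hiF_le T t)
      exact ⟨⟨x, hx⟩, bidx_eq_of T t ht x (by omega) h1 h2, rfl⟩
  have := congrArg Finset.card key
  rw [Finset.card_map] at this
  rw [this, Nat.card_Ico]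

lemma coe_list_val {n : ℕ} (l : List (Fin n)) :
    (do let a ← l; pure ((a:ℕ) : ℕ)) = l.map Fin.val := by
  induction l with
  | nil => rfl
  | cons a l ih => simp only [List.map_cons, ← ih]; rfl

lemma gaps_eq : gaps Tᶜ = List.ofFn (fun t : Fin (Tᶜ.card + 1) => hiF T (t : ℕ) - loF T (t : ℕ)) := by
  have hlen : (Tᶜ.sort (· ≤ ·)).length = Tᶜ.card := Finset.length_sort _
  have hg : gaps Tᶜ = List.zipWith (fun a b => b - a)
      (0 :: (Tᶜ.sort (· ≤ ·)).map (fun i : Fin n => (i : ℕ) + 1))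
      ((Tᶜ.sort (· ≤ ·)).map (fun i : Fin n => (i : ℕ) + 1) ++ [n+1]) := by
    simp only [gaps]
    rw [show ((do let a ← Tᶜ.sort (· ≤ ·); pure ((a:ℕ) : ℕ)) : List ℕ)
        = (Tᶜ.sort (· ≤ ·)).map Fin.val from coe_list_val _, List.map_map]
    rfl
  have hlen' : ((Tᶜ.sort (· ≤ ·)).map (fun i : Fin n => (i : ℕ) + 1)).length = Tᶜ.card := by
    rw [List.length_map, hlen]
  rw [hg]
  apply List.ext_getElem
  · simp [hlen']
  · intro t h1 h2
    simp only [List.getElem_ofFn]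
    rw [List.getElem_zipWith]
    have ht : t < Tᶜ.card + 1 := by simpa using h2
    congr 1
    · rcases Nat.lt_or_ge t Tᶜ.card with h | h
      · rw [List.getElem_append_left (by omega), List.getElem_map]
        rw [hiF, dif_pos h, Finset.orderEmbOfFin_apply]
        rfl
      · have hte : t = Tᶜ.card := by omega
        rw [List.getElem_append_right (by omega)]
        rw [hiF, dif_neg (by omega)]
        simp [hlen', hte]
    · rcases Nat.eq_zero_or_pos t with h | h
      · subst h
        rw [List.getElem_cons_zero, loF, dif_neg (by omega)]
      · obtain ⟨t', rfl⟩ : ∃ t', t = t' + 1 := ⟨t - 1, by omega⟩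
        rw [List.getElem_cons_succ, List.getElem_map]
        rw [loF, dif_pos ⟨by omega, by omega⟩, Finset.orderEmbOfFin_apply]
        simp

lemma card_lt_pairs {α : Type*} [LinearOrder α] [DecidableEq α] (s : Finset α) :
    ((s ×ˢ s).filter (fun p => p.1 < p.2)).card = s.card.choose 2 := by
  classical
  have hswap : ((s ×ˢ s).filter (fun p => p.1 < p.2)).card
      = ((s ×ˢ s).filter (fun p => p.2 < p.1)).card := by
    apply Finset.card_bij (fun p _ => Prod.swap p)
    · intro p hp
      simp only [Finset.mem_filter, Finset.mem_product] at hp ⊢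
      exact ⟨⟨hp.1.2, hp.1.1⟩, hp.2⟩
    · intro a _ b _ h
      exact Prod.swap_injective h
    · intro p hp
      simp only [Finset.mem_filter, Finset.mem_product] at hp
      exact ⟨Prod.swap p, by simp [Finset.mem_filter, Finset.mem_product, hp.1.1, hp.1.2, hp.2],
        by simp⟩
  have hunion : ((s ×ˢ s).filter (fun p => p.1 < p.2)) ∪ ((s ×ˢ s).filter (fun p => p.2 < p.1))
      = s.offDiag := by
    ext p
    simp only [Finset.mem_union, Finset.mem_filter, Finset.mem_product, Finset.mem_offDiag]
    constructor
    · rintro (⟨⟨h1, h2⟩, h⟩ | ⟨⟨h1, h2⟩, h⟩)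
      · exact ⟨h1, h2, ne_of_lt h⟩
      · exact ⟨h1, h2, (ne_of_lt h).symm⟩
    · rintro ⟨h1, h2, h⟩
      rcases lt_or_gt_of_ne h with h' | h'
      · exact Or.inl ⟨⟨h1, h2⟩, h'⟩
      · exact Or.inr ⟨⟨h1, h2⟩, h'⟩
  have hdisj : Disjoint ((s ×ˢ s).filter (fun p => p.1 < p.2))
      ((s ×ˢ s).filter (fun p => p.2 < p.1)) := by
    rw [Finset.disjoint_left]
    intro p h1 h2
    simp only [Finset.mem_filter] at h1 h2
    exact absurd (h1.2.trans h2.2) (lt_irrefl _)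
  have hcard := congrArg Finset.card hunion
  rw [Finset.card_union_of_disjoint hdisj, Finset.offDiag_card, ← hswap] at hcard
  rw [Nat.choose_two_right]
  have : s.card * (s.card - 1) = s.card * s.card - s.card := by
    cases Nat.eq_zero_or_pos s.card with
    | inl h => simp [h]
    | inr h => rw [Nat.mul_sub_one]
  omega

def sbPairs : Finset (Fin (n+1) × Fin (n+1)) :=
  Finset.univ.filter (fun p : Fin (n+1) × Fin (n+1) =>
    p.1 < p.2 ∧ bidx T (p.1 : ℕ) = bidx T (p.2 : ℕ))

lemma card_sbPairs :
    (sbPairs T).card = ∑ t ∈ Finset.range (Tᶜ.card + 1), (hiF T t - loF T t).choose 2 := by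
  classical
  rw [Finset.card_eq_sum_card_fiberwise
    (f := fun p : Fin (n+1) × Fin (n+1) => bidx T (p.1 : ℕ))
    (t := Finset.range (Tᶜ.card + 1))
    (fun p _ => Finset.mem_range.mpr (Nat.lt_succ_of_le (bidx_le T _)))]
  apply Finset.sum_congr rfl
  intro t ht
  rw [Finset.mem_range] at ht
  have hset : (sbPairs T).filter (fun p => bidx T (p.1 : ℕ) = t)
      = (((Finset.univ : Finset (Fin (n+1))).filter fun i : Fin (n+1) => bidx T (i : ℕ) = t) ×ˢ
         ((Finset.univ : Finset (Fin (n+1))).filter fun i : Fin (n+1) => bidx T (i : ℕ) = t)).filter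
        (fun p => p.1 < p.2) := by
    ext p
    simp only [sbPairs, Finset.mem_filter, Finset.mem_univ, true_and, Finset.mem_product]
    constructor
    · rintro ⟨⟨hlt, heq⟩, ht1⟩
      exact ⟨⟨ht1, heq ▸ ht1⟩, hlt⟩
    · rintro ⟨⟨ht1, ht2⟩, hlt⟩
      exact ⟨⟨hlt, ht1.trans ht2.symm⟩, ht1⟩
  rw [hset, card_lt_pairs, fiber_card T t (by omega)]

lemma zstat_eq :
    zstat T = ∑ t ∈ Finset.range (Tᶜ.card + 1), (hiF T t - loF T t).choose 2 := by
  rw [zstat, gaps_eq, List.map_ofFn, List.sum_ofFn]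
  rw [← Fin.sum_univ_eq_sum_range (fun t => (hiF T t - loF T t).choose 2)]
  rfl

lemma descent_step (w : Equiv.Perm (Fin (n+1))) (hw : T ⊆ Dset w) (p : Fin n) (hp : p ∈ T) :
    w p.succ < w p.castSucc := by
  have := hw hp
  simp only [Dset, Finset.mem_filter, Finset.mem_univ, true_and] at this
  exact this

lemma descent_chain (w : Equiv.Perm (Fin (n+1))) (hw : T ⊆ Dset w) :
    ∀ d : ℕ, ∀ a b : Fin (n+1), (b : ℕ) = (a : ℕ) + d + 1 →
      (∀ p : Fin n, (a : ℕ) ≤ (p : ℕ) → (p : ℕ) < (b : ℕ) → p ∈ T) → w b < w a := by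
  intro d
  induction d with
  | zero =>
    intro a b hab hT
    have han : (a : ℕ) < n := by have := b.isLt; omega
    set p : Fin n := ⟨(a : ℕ), han⟩ with hp
    have hpT : p ∈ T := hT p (le_refl _) (by simp [hp]; omega)
    have := descent_step T w hw p hpT
    have h1 : p.castSucc = a := by apply Fin.ext; simp [hp]
    have h2 : p.succ = b := by apply Fin.ext; simp [hp]; omega
    rwa [h1, h2] at this
  | succ d ih =>
    intro a b hab hT
    have hbn : (b : ℕ) ≤ n := by have := b.isLt; omega
    set m : Fin (n+1) := ⟨(a : ℕ) + d + 1, by omega⟩ with hm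
    have h1 : w m < w a := ih a m (by simp [hm]) (fun p h1 h2 => hT p h1 (by simp [hm] at h2; omega))
    have hpn : (a : ℕ) + d + 1 < n := by omega
    set p : Fin n := ⟨(a : ℕ) + d + 1, hpn⟩ with hp
    have hpT : p ∈ T := hT p (by simp [hp]; omega) (by simp [hp]; omega)
    have h2 := descent_step T w hw p hpT
    have e1 : p.castSucc = m := by apply Fin.ext; simp [hp, hm]
    have e2 : p.succ = b := by apply Fin.ext; simp [hp]; omega
    rw [e1, e2] at h2
    exact h2.trans h1

lemma between_mem (i j : Fin (n+1)) (hij : i < j) (hb : bidx T (i:ℕ) = bidx T (j:ℕ))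
    (p : Fin n) (h1 : (i:ℕ) ≤ (p:ℕ)) (h2 : (p:ℕ) < (j:ℕ)) : p ∈ T := by
  by_contra hpT
  have hpc : p ∈ Tᶜ := Finset.mem_compl.mpr hpT
  have hlt : bidx T (i:ℕ) < bidx T (j:ℕ) := by
    apply Finset.card_lt_card
    constructor
    · intro c hc
      simp only [Finset.mem_filter] at hc ⊢
      exact ⟨hc.1, lt_of_lt_of_le hc.2 (le_of_lt hij)⟩
    · intro hsub
      have hpj : p ∈ Tᶜ.filter (fun c : Fin n => (c:ℕ) < (j:ℕ)) :=
        Finset.mem_filter.mpr ⟨hpc, h2⟩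
      have := Finset.mem_filter.mp (hsub hpj)
      omega
  omega

lemma lower_bound (w : Equiv.Perm (Fin (n+1))) (hw : T ⊆ Dset w) :
    (sbPairs T).card ≤ invNum w := by
  apply Finset.card_le_card
  intro p hp
  simp only [sbPairs, Finset.mem_filter, Finset.mem_univ, true_and] at hp
  simp only [invNum, Finset.mem_filter, Finset.mem_univ, true_and]
  refine ⟨hp.1, ?_⟩
  have hij : (p.1 : ℕ) < (p.2 : ℕ) := hp.1
  exact descent_chain T w hw ((p.2:ℕ) - (p.1:ℕ) - 1) p.1 p.2 (by omega)
    (between_mem T p.1 p.2 hp.1 hp.2)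

def wfun (i : Fin (n+1)) : Fin (n+1) :=
  ⟨loF T (bidx T (i:ℕ)) + (hiF T (bidx T (i:ℕ)) - 1 - (i:ℕ)), by
    have h0 := i.isLt
    have h1 := loF_le_self T (i:ℕ)
    have h2 := self_lt_hiF T (i:ℕ) (by omega)
    have h3 := hiF_le T (bidx T (i:ℕ))
    omega⟩

lemma bidx_wfun (i : Fin (n+1)) : bidx T ((wfun T i : Fin (n+1)) : ℕ) = bidx T (i:ℕ) := by
  have h0 := i.isLt
  have h1 := loF_le_self T (i:ℕ)
  have h2 := self_lt_hiF T (i:ℕ) (by omega)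
  have h3 := hiF_le T (bidx T (i:ℕ))
  apply bidx_eq_of T _ (bidx_le T _) _ (by simp [wfun]; omega)
  · simp only [wfun]; omega
  · simp only [wfun]; omega

lemma wfun_invol (i : Fin (n+1)) : wfun T (wfun T i) = i := by
  have h0 := i.isLt
  have h1 := loF_le_self T (i:ℕ)
  have h2 := self_lt_hiF T (i:ℕ) (by omega)
  have h3 := hiF_le T (bidx T (i:ℕ))
  apply Fin.ext
  show (loF T (bidx T ((wfun T i : Fin (n+1)):ℕ)) + (hiF T (bidx T ((wfun T i : Fin (n+1)):ℕ)) - 1 - ((wfun T i : Fin (n+1)):ℕ))) = (i:ℕ)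
  rw [bidx_wfun]
  simp only [wfun]
  omega

def wmin : Equiv.Perm (Fin (n+1)) :=
  ⟨wfun T, wfun T, wfun_invol T, wfun_invol T⟩

lemma bidx_succ_eq (i : Fin n) (hi : i ∈ T) :
    bidx T ((i:ℕ) + 1) = bidx T (i:ℕ) := by
  unfold bidx
  congr 1
  apply Finset.filter_congr
  intro c hc
  simp only [Finset.mem_compl] at hc
  have : c ≠ i := fun h => hc (h ▸ hi)
  have : (c:ℕ) ≠ (i:ℕ) := fun h => this (Fin.ext h)
  constructor <;> intro h <;> omega

lemma dset_wmin : T ⊆ Dset (wmin T) := by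
  intro i hi
  simp only [Dset, Finset.mem_filter, Finset.mem_univ, true_and]
  show wfun T i.succ < wfun T i.castSucc
  have hs : ((i.succ : Fin (n+1)) : ℕ) = (i:ℕ) + 1 := rfl
  have hc : ((i.castSucc : Fin (n+1)) : ℕ) = (i:ℕ) := rfl
  have hb : bidx T ((i.succ : Fin (n+1)) : ℕ) = bidx T ((i.castSucc : Fin (n+1)) : ℕ) := by
    rw [hs, hc]; exact bidx_succ_eq T i hi
  have hbse := bidx_succ_eq T i hi
  have h2 := self_lt_hiF T ((i:ℕ)+1) (by have := i.isLt; omega)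
  rw [hbse] at h2
  have h1 := loF_le_self T (i:ℕ)
  show (wfun T i.succ : ℕ) < (wfun T i.castSucc : ℕ)
  simp only [wfun, hs, hc, hbse]
  omega

lemma invNum_wmin : invNum (wmin T) = (sbPairs T).card := by
  unfold invNum
  congr 1
  apply Finset.filter_congr
  intro p _
  show (p.1 < p.2 ∧ wfun T p.2 < wfun T p.1) ↔ _
  constructor
  · rintro ⟨hlt, hinv⟩
    refine ⟨hlt, ?_⟩
    by_contra hne
    have hmono : bidx T (p.1:ℕ) < bidx T (p.2:ℕ) :=
      lt_of_le_of_ne (bidx_mono T (le_of_lt hlt)) hne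
    have hcross := hiF_le_loF T hmono (bidx_le T (p.2:ℕ))
    have e1 := loF_le_self T (p.1:ℕ)
    have e2 := self_lt_hiF T (p.1:ℕ) (by have := p.1.isLt; omega)
    have hv1 : (wfun T p.1 : ℕ) < hiF T (bidx T (p.1:ℕ)) := by simp only [wfun]; omega
    have hv2 : loF T (bidx T (p.2:ℕ)) ≤ (wfun T p.2 : ℕ) := by simp only [wfun]; omega
    have : (wfun T p.1 : ℕ) < (wfun T p.2 : ℕ) := by omega
    have := Fin.lt_def.mp hinv
    omega
  · rintro ⟨hlt, heq⟩
    refine ⟨hlt, ?_⟩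
    have e1 := loF_le_self T (p.1:ℕ)
    have e2 := self_lt_hiF T (p.2:ℕ) (by have := p.2.isLt; omega)
    show (wfun T p.2 : ℕ) < (wfun T p.1 : ℕ)
    simp only [wfun, heq]
    have : (p.1:ℕ) < (p.2:ℕ) := hlt
    omega

end StmtAux

/-- The minimum of `inv(w)` over permutations `w` with `T ⊆ D(w)` equals `z(T)`. -/
theorem stmt17 (n : ℕ) (T : Finset (Fin n)) :
    (∀ w : Equiv.Perm (Fin (n+1)), T ⊆ Dset w → zstat T ≤ invNum w) ∧
    (∃ w : Equiv.Perm (Fin (n+1)), T ⊆ Dset w ∧ invNum w = zstat T) := by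
  constructor
  · intro w hw
    calc zstat T = (sbPairs T).card := by rw [zstat_eq, ← card_sbPairs]
    _ ≤ invNum w := lower_bound T w hw
  · exact ⟨wmin T, dset_wmin T, by rw [invNum_wmin, card_sbPairs, ← zstat_eq]⟩
end
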